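/- A class A of pairs of subsets of ℕ is 𝔥-large if and only if A is upward closed in both coordinates and contains an 𝔥-regular subclass. -/

import Mathlib

/-- A class `A` of subsets of `ℕ` is partition large if it is nonempty, upward closed,
and every finite cover of `ℕ` has a part in `A`. -/
def PartitionLarge (A : Set (Set ℕ)) : Prop :=
  A.Nonempty ∧
  (∀ X Y : Set ℕ, X ∈ A → X ⊆ Y → Y ∈ A) ∧
  (∀ (k : ℕ) (Y : Fin (k + 1) → Set ℕ), (Set.univ : Set ℕ) ⊆ ⋃ i, Y i → ∃ i, Y i ∈ A)

/-- A class `L` of pairs of subsets of `ℕ` is 𝔥-regular if it is nonempty, upward closed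
in both coordinates, and for every `(X, Y) ∈ L`, every finite cover `Z₀, …, Z_k` of `X`
and every `m`, there is `j` with `(Z_j, Y ∖ {0, …, m−1}) ∈ L`. -/
def HRegular (L : Set (Set ℕ × Set ℕ)) : Prop :=
  L.Nonempty ∧
  (∀ p ∈ L, ∀ X' Y' : Set ℕ, p.1 ⊆ X' → p.2 ⊆ Y' → (X', Y') ∈ L) ∧
  (∀ p ∈ L, ∀ (k : ℕ) (Z : Fin (k + 1) → Set ℕ), p.1 ⊆ ⋃ j, Z j →
    ∀ m : ℕ, ∃ j, (Z j, p.2 \ Set.Iio m) ∈ L)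

/-- A class `A` of pairs of subsets of `ℕ` is 𝔥-large if it is upward closed in both
coordinates and, for every cofinite `Y`, the slice `{X : (X, Y) ∈ A}` is partition large. -/
def HLarge (A : Set (Set ℕ × Set ℕ)) : Prop :=
  (∀ p ∈ A, ∀ X' Y' : Set ℕ, p.1 ⊆ X' → p.2 ⊆ Y' → (X', Y') ∈ A) ∧
  (∀ Y : Set ℕ, Yᶜ.Finite → PartitionLarge {X : Set ℕ | (X, Y) ∈ A})

/-!
Call `B` partition large on `X` when every finite cover of `X` has a part in `B`. This is
partition regular in `X`: if every part of a cover of `X` admitted a cover avoiding `B`, these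
would combine into one cover of `X` avoiding `B`. For an 𝔥-large `A`, the pairs `(X, Y)` with `Y`
cofinite and every slice `{X | (X, Y') ∈ A}` with `Y'` cofinite partition large on `X` form an
𝔥-regular subclass: the slices increase with `Y'`, so finitely many bad `Y'` are handled at once
by their intersection, which is again cofinite. Conversely, regularity applied to `(ℕ, ℕ)` and a
tail of a cofinite `Y` shows that every slice of an 𝔥-regular class is partition large.
-/

open Filter

section PartitionLargeOn

variable {α : Type*}

def PartitionLargeOn (B : Set (Set α)) (X : Set α) : Prop :=
  ∀ S : Finset (Set α), X ⊆ ⋃₀ ↑S → ∃ Z ∈ S, Z ∈ B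

variable {B B' : Set (Set α)} {X X' : Set α}

lemma PartitionLargeOn.mono (h : PartitionLargeOn B X) (hB : B ⊆ B') : PartitionLargeOn B' X :=
  fun S hS => (h S hS).imp fun _ ⟨hZS, hZB⟩ => ⟨hZS, hB hZB⟩

lemma PartitionLargeOn.mono_set (h : PartitionLargeOn B X) (hX : X ⊆ X') :
    PartitionLargeOn B X' :=
  fun S hS => h S (hX.trans hS)

lemma PartitionLargeOn.mem (h : PartitionLargeOn B X) : X ∈ B := by
  obtain ⟨Z, hZ, hZB⟩ := h {X} (by simp)
  rwa [Finset.mem_singleton.mp hZ] at hZB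

lemma PartitionLargeOn.exists_of_subset_iUnion {κ : Type*} [Fintype κ]
    (h : PartitionLargeOn B X) {Z : κ → Set α} (hZ : X ⊆ ⋃ j, Z j) :
    ∃ j, PartitionLargeOn B (Z j) := by
  classical
  by_contra! hbad
  simp only [PartitionLargeOn, not_forall, not_exists, not_and] at hbad
  choose T hTcov hTB using hbad
  obtain ⟨W, hW, hWB⟩ := h (Finset.univ.biUnion T) fun x hx => by
    obtain ⟨j, hxj⟩ := Set.mem_iUnion.mp (hZ hx)
    obtain ⟨W, hW, hxW⟩ := hTcov j hxj
    exact ⟨W, Finset.mem_biUnion.mpr ⟨j, Finset.mem_univ j, hW⟩, hxW⟩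
  obtain ⟨j, -, hWj⟩ := Finset.mem_biUnion.mp hW
  exact hTB j W hWj hWB

lemma exists_forall_partitionLargeOn_of_subset_iUnion {β κ : Type*} [Fintype κ]
    {F : Filter β} {B : Set β → Set (Set α)} (hB : Monotone B)
    (hX : ∀ Y ∈ F, PartitionLargeOn (B Y) X) {Z : κ → Set α} (hZ : X ⊆ ⋃ j, Z j) :
    ∃ j, ∀ Y ∈ F, PartitionLargeOn (B Y) (Z j) := by
  by_contra! hbad
  choose Y hYF hY using hbad
  obtain ⟨j, hj⟩ := (hX (⋂ j, Y j) (iInter_mem.mpr hYF)).exists_of_subset_iUnion hZ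
  exact hY j (hj.mono (hB (Set.iInter_subset Y j)))

end PartitionLargeOn

lemma PartitionLarge.partitionLargeOn_univ {B : Set (Set ℕ)} (h : PartitionLarge B) :
    PartitionLargeOn B Set.univ := by
  intro S hS
  obtain ⟨Z₀, hZ₀, -⟩ := hS (Set.mem_univ 0)
  let Y : Fin (S.card + 1) → Set ℕ := Fin.cons Z₀ fun i => S.equivFin.symm i
  have hYS : ∀ i, Y i ∈ S := Fin.cases hZ₀ fun i => (S.equivFin.symm i).2
  obtain ⟨i, hi⟩ := h.2.2 S.card Y fun x _ => by
    obtain ⟨W, hW, hxW⟩ := hS (Set.mem_univ x)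
    refine Set.mem_iUnion.mpr ⟨(S.equivFin ⟨W, hW⟩).succ, ?_⟩
    simpa [Y] using hxW
  exact ⟨Y i, hYS i, hi⟩

lemma PartitionLarge.mono {B B' : Set (Set ℕ)} (h : PartitionLarge B) (hBB' : B ⊆ B')
    (hup : ∀ X Y : Set ℕ, X ∈ B' → X ⊆ Y → Y ∈ B') : PartitionLarge B' :=
  ⟨h.1.mono hBB', hup, fun k Y hY => (h.2.2 k Y hY).imp fun _ hi => hBB' hi⟩

lemma HRegular.partitionLarge_slice {L : Set (Set ℕ × Set ℕ)} (hL : HRegular L)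
    {Y : Set ℕ} (hY : Yᶜ.Finite) : PartitionLarge {X | (X, Y) ∈ L} := by
  obtain ⟨⟨p, hp⟩, hLup, hLreg⟩ := hL
  have huniv : (Set.univ, Set.univ) ∈ L := hLup p hp _ _ (Set.subset_univ _) (Set.subset_univ _)
  obtain ⟨m, hm⟩ := mem_atTop_sets.mp (Nat.cofinite_eq_atTop ▸ mem_cofinite.mpr hY)
  have htail : Set.univ \ Set.Iio m ⊆ Y := fun n hn => hm n (not_lt.mp hn.2)
  have hcover : ∀ (k : ℕ) (Z : Fin (k + 1) → Set ℕ), Set.univ ⊆ ⋃ i, Z i →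
      ∃ i, (Z i, Y) ∈ L := fun k Z hZ =>
    (hLreg _ huniv k Z hZ m).imp fun i hi => hLup _ hi _ _ subset_rfl htail
  obtain ⟨i, hi⟩ := hcover 0 (fun _ => Set.univ) fun x _ => Set.mem_iUnion.mpr ⟨0, trivial⟩
  exact ⟨⟨_, hi⟩, fun X X' hX hXX' => hLup _ hX _ _ hXX' subset_rfl, hcover⟩

def regularCore (A : Set (Set ℕ × Set ℕ)) : Set (Set ℕ × Set ℕ) :=
  {p | p.2 ∈ cofinite ∧ ∀ Y ∈ cofinite, PartitionLargeOn {X | (X, Y) ∈ A} p.1}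

lemma regularCore_subset (A : Set (Set ℕ × Set ℕ)) : regularCore A ⊆ A :=
  fun p hp => (hp.2 p.2 hp.1).mem

lemma HLarge.hRegular_regularCore {A : Set (Set ℕ × Set ℕ)} (hA : HLarge A) :
    HRegular (regularCore A) := by
  obtain ⟨hup, hlarge⟩ := hA
  have hslice : Monotone fun Y => {X | (X, Y) ∈ A} :=
    fun Y Y' hYY' X hX => hup _ hX _ _ subset_rfl hYY'
  refine ⟨⟨(Set.univ, Set.univ), univ_mem,
    fun Y hY => (hlarge Y hY).partitionLargeOn_univ⟩, ?_, ?_⟩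
  · rintro p ⟨hp₂, hp₁⟩ X' Y' hX' hY'
    exact ⟨mem_of_superset hp₂ hY', fun Y hY => (hp₁ Y hY).mono_set hX'⟩
  · rintro p ⟨hp₂, hp₁⟩ k Z hZ m
    obtain ⟨j, hj⟩ := exists_forall_partitionLargeOn_of_subset_iUnion hslice hp₁ hZ
    exact ⟨j, sdiff_mem hp₂ (Set.finite_Iio m).compl_mem_cofinite, hj⟩

/-- A class of pairs is 𝔥-large iff it is upward closed in both coordinates and contains
an 𝔥-regular subclass. -/
theorem hLarge_iff (A : Set (Set ℕ × Set ℕ)) :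
    HLarge A ↔
      ((∀ p ∈ A, ∀ X' Y' : Set ℕ, p.1 ⊆ X' → p.2 ⊆ Y' → (X', Y') ∈ A) ∧
        ∃ L : Set (Set ℕ × Set ℕ), HRegular L ∧ L ⊆ A) := by
  constructor
  · intro hA
    exact ⟨hA.1, regularCore A, hA.hRegular_regularCore, regularCore_subset A⟩
  · rintro ⟨hup, L, hL, hLA⟩
    exact ⟨hup, fun Y hY => (hL.partitionLarge_slice hY).mono (fun _ hX => hLA hX)
      fun X X' hX hXX' => hup _ hX _ _ hXX' subset_rfl⟩
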